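/- E-step surrogate (Lemma 1): with z, λ_n = a_nᴴ s + b_n, previous estimate s^{t−1} giving θ_n^t = arg(a_nᴴ s^{t−1} + b_n) and κ_n^t = 2 z_n |a_nᴴ s^{t−1} + b_n| / σ², the conditional expectation Σ_n E_{θ_n ~ vonMises(θ_n^t, κ_n^t)}[log p(z_n, θ_n; s)] equals −(1/σ²) Σ_n ‖ z_n e^{i θ_n^t} R(κ_n^t) − λ_n ‖² + C, where C is independent of s and R = I₁/I₀. -/

import Mathlib

/-!
Up to an additive constant, the log-likelihood `-‖z e^{iθ} - λ‖² / σ²` is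
`(2 z ‖λ‖ / σ²) cos (θ - arg λ)`, an affine function of a single cosine. Its expectation under
the von Mises law therefore only involves the total mass and the first circular moment
`∫ cos (θ - φ) = R(κ) cos (θ₀ - φ)`, both computed by shifting the integrand by the period.
Completing the square turns `2 z R(κ) ‖λ‖ cos (θ₀ - arg λ)` back into `-‖z R(κ) e^{iθ₀} - λ‖²`
up to terms free of `s`.
-/

open ComplexConjugate

noncomputable def I0 (x : ℝ) : ℝ :=
  (2 * Real.pi)⁻¹ * ∫ θ in (0:ℝ)..(2 * Real.pi), Real.exp (x * Real.cos θ)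

noncomputable def I1 (x : ℝ) : ℝ :=
  (2 * Real.pi)⁻¹ * ∫ θ in (0:ℝ)..(2 * Real.pi), Real.exp (x * Real.cos θ) * Real.cos θ

noncomputable def R (x : ℝ) : ℝ := I1 x / I0 x

/-- The effective signal `λ_n(s) = a_nᴴ s + b_n`. -/
noncomputable def lam {K : ℕ} (a : Fin K → ℂ) (b : ℂ) (s : Fin K → ℂ) : ℂ :=
  (∑ i, conj (a i) * s i) + b

open Real

lemma I0_pos (κ : ℝ) : 0 < I0 κ :=
  mul_pos (by positivity) <| intervalIntegral.intervalIntegral_pos_of_pos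
    (Continuous.intervalIntegrable (by fun_prop) _ _) (fun _ => exp_pos _) two_pi_pos

lemma Function.Periodic.intervalIntegral_comp_sub_right {f : ℝ → ℝ} {T : ℝ}
    (hf : Function.Periodic f T) (a c : ℝ) :
    ∫ x in a..a + T, f (x - c) = ∫ x in a..a + T, f x := by
  rw [intervalIntegral.integral_comp_sub_right, add_sub_right_comm]
  exact hf.intervalIntegral_add_eq (a - c) a

lemma integral_exp_mul_cos_mul_sin (κ : ℝ) :
    ∫ u in (0:ℝ)..2 * π, exp (κ * cos u) * sin u = 0 := by
  -- `u ↦ 2π - u` maps `[0, 2π]` to itself and negates the integrand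
  have hreflect := intervalIntegral.integral_comp_sub_left
    (fun u => exp (κ * cos u) * sin u) (a := 0) (b := 2 * π) (2 * π)
  simp only [cos_two_pi_sub, sin_two_pi_sub, mul_neg, intervalIntegral.integral_neg,
    sub_self, sub_zero] at hreflect
  linarith

lemma integral_exp_mul_cos_sub (κ μ : ℝ) :
    ∫ θ in (0:ℝ)..2 * π, exp (κ * cos (θ - μ)) = 2 * π * I0 κ := by
  have hper : Function.Periodic (fun u => exp (κ * cos u)) (2 * π) := fun u => by
    simp only [cos_add_two_pi]
  have hshift := hper.intervalIntegral_comp_sub_right 0 μ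
  rw [zero_add] at hshift
  rw [hshift, I0, mul_inv_cancel_left₀ two_pi_pos.ne']

lemma integral_exp_mul_cos_sub_mul_cos (κ μ φ : ℝ) :
    ∫ θ in (0:ℝ)..2 * π, exp (κ * cos (θ - μ)) * cos (θ - φ)
      = 2 * π * I1 κ * cos (μ - φ) := by
  set g : ℝ → ℝ := fun u => exp (κ * cos u) * cos (u + (μ - φ))
  have hper : Function.Periodic g (2 * π) := fun u => by
    simp only [g, cos_add_two_pi, add_right_comm u (2 * π), cos_add_two_pi]
  have hshift := hper.intervalIntegral_comp_sub_right 0 μ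
  simp only [zero_add, g, sub_add_sub_cancel] at hshift
  have hexpand : ∀ u, g u = cos (μ - φ) * (exp (κ * cos u) * cos u)
      - sin (μ - φ) * (exp (κ * cos u) * sin u) := fun u => by
    simp only [g, cos_add]; ring
  rw [hshift, intervalIntegral.integral_congr fun u _ => hexpand u,
    intervalIntegral.integral_sub (Continuous.intervalIntegrable (by fun_prop) _ _)
      (Continuous.intervalIntegrable (by fun_prop) _ _),
    intervalIntegral.integral_const_mul, intervalIntegral.integral_const_mul,
    integral_exp_mul_cos_mul_sin, I1, mul_inv_cancel_left₀ two_pi_pos.ne']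
  ring

noncomputable def vonMisesDensity (κ μ θ : ℝ) : ℝ :=
  exp (κ * cos (θ - μ)) / (2 * π * I0 κ)

lemma continuous_vonMisesDensity (κ μ : ℝ) : Continuous (vonMisesDensity κ μ) := by
  unfold vonMisesDensity; fun_prop

lemma integral_vonMisesDensity (κ μ : ℝ) :
    ∫ θ in (0:ℝ)..2 * π, vonMisesDensity κ μ θ = 1 := by
  simp only [vonMisesDensity, intervalIntegral.integral_div, integral_exp_mul_cos_sub]
  exact div_self (mul_pos two_pi_pos (I0_pos κ)).ne'

lemma integral_vonMisesDensity_mul_cos (κ μ φ : ℝ) :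
    ∫ θ in (0:ℝ)..2 * π, vonMisesDensity κ μ θ * cos (θ - φ) = R κ * cos (μ - φ) := by
  simp only [vonMisesDensity, div_mul_eq_mul_div, intervalIntegral.integral_div,
    integral_exp_mul_cos_sub_mul_cos, R]
  field_simp [two_pi_pos.ne', (I0_pos κ).ne']

noncomputable def complexGaussianPDF (σ : ℝ) (μ w : ℂ) : ℝ :=
  (π * σ ^ 2)⁻¹ * exp (-‖w - μ‖ ^ 2 / σ ^ 2)

lemma log_complexGaussianPDF {σ : ℝ} (hσ : σ ≠ 0) (μ w : ℂ) :
    log (complexGaussianPDF σ μ w) = log (π * σ ^ 2)⁻¹ - ‖w - μ‖ ^ 2 / σ ^ 2 := by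
  rw [complexGaussianPDF, log_mul (by positivity) (exp_pos _).ne', log_exp, neg_div,
    ← sub_eq_add_neg]

lemma norm_ofReal_mul_exp_mul_I_sub_sq (r θ : ℝ) (μ : ℂ) :
    ‖(r : ℂ) * Complex.exp (θ * Complex.I) - μ‖ ^ 2
      = r ^ 2 + ‖μ‖ ^ 2 - 2 * r * ‖μ‖ * cos (θ - μ.arg) := by
  rw [Complex.sq_norm, Complex.sq_norm, Complex.normSq_apply, Complex.normSq_apply, cos_sub]
  simp only [Complex.sub_re, Complex.sub_im, Complex.re_ofReal_mul, Complex.im_ofReal_mul,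
    Complex.exp_ofReal_mul_I_re, Complex.exp_ofReal_mul_I_im]
  linear_combination r ^ 2 * sin_sq_add_cos_sq θ + 2 * r * cos θ * Complex.norm_mul_cos_arg μ
    + 2 * r * sin θ * Complex.norm_mul_sin_arg μ

lemma integral_vonMisesDensity_mul_log_complexGaussianPDF {σ : ℝ} (hσ : σ ≠ 0)
    (r κ θ₀ : ℝ) (μ : ℂ) :
    ∫ θ in (0:ℝ)..2 * π,
        vonMisesDensity κ θ₀ θ * log (complexGaussianPDF σ μ (r * Complex.exp (θ * Complex.I)))
      = -(1 / σ ^ 2) * ‖(r : ℂ) * Complex.exp (θ₀ * Complex.I) * (R κ : ℂ) - μ‖ ^ 2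
        + (log (π * σ ^ 2)⁻¹ + r ^ 2 * (R κ ^ 2 - 1) / σ ^ 2) := by
  set c₀ := log (π * σ ^ 2)⁻¹ - (r ^ 2 + ‖μ‖ ^ 2) / σ ^ 2
  set c₁ := 2 * r * ‖μ‖ / σ ^ 2
  have hintegrand : ∀ θ, vonMisesDensity κ θ₀ θ
        * log (complexGaussianPDF σ μ (r * Complex.exp (θ * Complex.I)))
      = c₀ * vonMisesDensity κ θ₀ θ + c₁ * (vonMisesDensity κ θ₀ θ * cos (θ - μ.arg)) :=
    fun θ => by
      rw [log_complexGaussianPDF hσ, norm_ofReal_mul_exp_mul_I_sub_sq]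
      ring
  have hcont := continuous_vonMisesDensity κ θ₀
  rw [intervalIntegral.integral_congr fun θ _ => hintegrand θ,
    intervalIntegral.integral_add (Continuous.intervalIntegrable (by fun_prop) _ _)
      (Continuous.intervalIntegrable (by fun_prop) _ _),
    intervalIntegral.integral_const_mul, intervalIntegral.integral_const_mul,
    integral_vonMisesDensity, integral_vonMisesDensity_mul_cos,
    show (r : ℂ) * Complex.exp (θ₀ * Complex.I) * (R κ : ℂ)
      = ((r * R κ : ℝ) : ℂ) * Complex.exp (θ₀ * Complex.I) by push_cast; ring,
    norm_ofReal_mul_exp_mul_I_sub_sq]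
  ring

theorem em_surrogate_general {K N : ℕ} (σ : ℝ) (hσ : 0 < σ)
    (a : Fin N → Fin K → ℂ) (b : Fin N → ℂ) (z : Fin N → ℝ)
    (sPrev : Fin K → ℂ) :
    ∃ C : ℝ, ∀ s : Fin K → ℂ,
      (∑ n, ∫ θ in (0:ℝ)..(2 * Real.pi),
          (Real.exp ((2 * z n * ‖lam (a n) (b n) sPrev‖ / σ ^ 2) *
                Real.cos (θ - Complex.arg (lam (a n) (b n) sPrev))) /
              (2 * Real.pi * I0 (2 * z n * ‖lam (a n) (b n) sPrev‖ / σ ^ 2))) *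
            Real.log ((Real.pi * σ ^ 2)⁻¹ *
              Real.exp (-‖(z n : ℂ) * Complex.exp (θ * Complex.I) -
                  lam (a n) (b n) s‖ ^ 2 / σ ^ 2)))
        = -(1 / σ ^ 2) *
            (∑ n, ‖
                (z n : ℂ) * Complex.exp ((Complex.arg (lam (a n) (b n) sPrev) : ℂ) * Complex.I) *
                    (R (2 * z n * ‖lam (a n) (b n) sPrev‖ / σ ^ 2) : ℝ) -
                  lam (a n) (b n) s‖ ^ 2)
          + C := by
  refine ⟨∑ n, (log (π * σ ^ 2)⁻¹
      + z n ^ 2 * (R (2 * z n * ‖lam (a n) (b n) sPrev‖ / σ ^ 2) ^ 2 - 1) / σ ^ 2), fun s => ?_⟩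
  rw [Finset.mul_sum, ← Finset.sum_add_distrib]
  exact Finset.sum_congr rfl fun n _ =>
    integral_vonMisesDensity_mul_log_complexGaussianPDF hσ.ne' (z n) _ _ _

theorem em_surrogate {K N : ℕ} (σ : ℝ) (hσ : 0 < σ)
    (a : Fin N → Fin K → ℂ) (b : Fin N → ℂ) (z : Fin N → ℝ) (hz : ∀ n, 0 ≤ z n)
    (sPrev : Fin K → ℂ) (hPrev : ∀ n, lam (a n) (b n) sPrev ≠ 0) :
    ∃ C : ℝ, ∀ s : Fin K → ℂ,
      (∑ n, ∫ θ in (0:ℝ)..(2 * Real.pi),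
          (Real.exp ((2 * z n * ‖lam (a n) (b n) sPrev‖ / σ ^ 2) *
                Real.cos (θ - Complex.arg (lam (a n) (b n) sPrev))) /
              (2 * Real.pi * I0 (2 * z n * ‖lam (a n) (b n) sPrev‖ / σ ^ 2))) *
            Real.log ((Real.pi * σ ^ 2)⁻¹ *
              Real.exp (-‖(z n : ℂ) * Complex.exp (θ * Complex.I) -
                  lam (a n) (b n) s‖ ^ 2 / σ ^ 2)))
        = -(1 / σ ^ 2) *
            (∑ n, ‖
                (z n : ℂ) * Complex.exp ((Complex.arg (lam (a n) (b n) sPrev) : ℂ) * Complex.I) *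
                    (R (2 * z n * ‖lam (a n) (b n) sPrev‖ / σ ^ 2) : ℝ) -
                  lam (a n) (b n) s‖ ^ 2)
          + C :=
  em_surrogate_general σ hσ a b z sPrev
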